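/- Let g ≥ 0 and 0 ≤ r ≤ g be integers. Let A be a real g×g matrix of block form A = [[A₀, 0],[0, 0]] with A₀ a positive definite r×r block, and let Z be a real g×g matrix with block decomposition Z = [[Z_{r,r}, Z_{r,g−r}],[Z_{g−r,r}, Z_{g−r,g−r}]] such that the (g−r)×(g−r) block Z_{g−r,g−r} is positive definite. Set V = Vor(A₀) × Vor(Z_{g−r,g−r}) ⊆ ℝ^r × ℝ^{g−r} = ℝ^g. Then: (1) V is a fundamental domain for ℤ^g in ℝ^g, i.e. every element of ℝ^g is congruent modulo ℤ^g to an element of V and no two distinct interior points of V are congruent modulo ℤ^g; (2) I_V(A) = I(A₀); and (3) I_V(Z) = I_{Vor(A₀)}(Z_{r,r}) + I(Z_{g−r,g−r}). -/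

import Mathlib

open Matrix MeasureTheory

/-- The Voronoi region of a real square matrix `Z` indexed by a finite type `ι`:
`Vor(Z) = {β ∈ ℝ^ι : nᵀZβ ≤ ½ nᵀZn for all n ∈ ℤ^ι}`. -/
def VorMatrix {ι : Type*} [Fintype ι] (Z : Matrix ι ι ℝ) : Set (ι → ℝ) :=
  {β | ∀ n : ι → ℤ,
    (fun i => (n i : ℝ)) ⬝ᵥ Z.mulVec β ≤
      (1 / 2) * ((fun i => (n i : ℝ)) ⬝ᵥ Z.mulVec (fun i => (n i : ℝ)))}

/-- `I_V(Z) = ∫_V βᵀZβ dβ` for a set `V ⊆ ℝ^ι` and a real square matrix `Z`,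
with respect to the standard Lebesgue measure. -/
noncomputable def momentOn {ι : Type*} [Fintype ι] (V : Set (ι → ℝ)) (Z : Matrix ι ι ℝ) : ℝ :=
  ∫ β in V, β ⬝ᵥ Z.mulVec β

/-!
Minimising `(x - n)ᵀ M (x - n)` over lattice points `n` gives every `x` an integral translate in
`Vor(M)`, the set of points that are, for the quadratic form of `M`, at least as close to `0` as to
any other lattice point; in particular `Vor(M)` is compact. If `u` and `u - n` both lie in `Vor(M)`
then `u` lies on the hyperplane bisecting `0` and `n`, so for `n ≠ 0` it is not an interior point.
Hence distinct translates of the convex set `Vor(M)` meet only in its null frontier, and `Vor(M)`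
is a fundamental domain of volume `1`.

For `V = Vor(A₀) × Vor(Z₂₂)` these facts hold block by block. Writing `β = (x, y)`, the form
`βᵀ Z β` is `xᵀ Z₁₁ x + yᵀ Z₂₂ y` plus cross terms that are odd in `y`; since `Vor(Z₂₂)` is
symmetric they integrate to zero, and Fubini gives the moments.
-/

open Filter Topology

section IntVec

variable {ι : Type*}

def intVec : (ι → ℤ) →+ (ι → ℝ) := (Int.castAddHom ℝ).compLeft ι

@[simp]
lemma intVec_apply (n : ι → ℤ) (i : ι) : intVec n i = n i := rfl

lemma intVec_injective : Function.Injective (intVec : (ι → ℤ) → ι → ℝ) :=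
  fun _ _ h => funext fun i => Int.cast_injective (congrFun h i)

lemma tendsto_intVec_cofinite_cocompact [Finite ι] :
    Tendsto (intVec : (ι → ℤ) → ι → ℝ) cofinite (cocompact _) := by
  rw [← coprodᵢ_cofinite, ← coprodᵢ_cocompact]
  exact Tendsto.pi_map_coprodᵢ fun _ => Int.tendsto_coe_cofinite

lemma mem_span_basisFun_iff [Fintype ι] [DecidableEq ι] {v : ι → ℝ} :
    v ∈ Submodule.span ℤ (Set.range (Pi.basisFun ℝ ι)) ↔ ∃ n, intVec n = v := by
  simp only [(Pi.basisFun ℝ ι).mem_span_iff_repr_mem ℤ, Pi.basisFun_repr, Set.mem_range,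
    algebraMap_int_eq, eq_intCast, Classical.skolem, funext_iff, intVec_apply]

end IntVec

namespace Matrix

variable {ι : Type*} [Fintype ι] {M : Matrix ι ι ℝ}

lemma IsHermitian.dotProduct_mulVec_comm (hM : M.IsHermitian) (x y : ι → ℝ) :
    x ⬝ᵥ M *ᵥ y = y ⬝ᵥ M *ᵥ x := by
  rw [dotProduct_mulVec, ← mulVec_transpose, ← conjTranspose_eq_transpose_of_trivial, hM.eq,
    dotProduct_comm]

lemma IsHermitian.dotProduct_mulVec_sub (hM : M.IsHermitian) (x y : ι → ℝ) :
    (x - y) ⬝ᵥ M *ᵥ (x - y) = x ⬝ᵥ M *ᵥ x - 2 * (y ⬝ᵥ M *ᵥ x) + y ⬝ᵥ M *ᵥ y := by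
  rw [mulVec_sub, sub_dotProduct, dotProduct_sub, dotProduct_sub, hM.dotProduct_mulVec_comm x y]
  ring

lemma PosDef.exists_pos_mul_sq_norm_le (hM : M.PosDef) :
    ∃ c > 0, ∀ v : ι → ℝ, c * ‖v‖ ^ 2 ≤ v ⬝ᵥ M *ᵥ v := by
  cases isEmpty_or_nonempty ι
  · exact ⟨1, one_pos, fun v => by simp [Subsingleton.elim v 0]⟩
  -- `c` is the minimum of the quadratic form on the unit sphere
  obtain ⟨u, hu, hmin⟩ := (isCompact_sphere (0 : ι → ℝ) 1).exists_isMinOn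
    (NormedSpace.sphere_nonempty.2 zero_le_one)
    (by fun_prop : Continuous fun v : ι → ℝ => v ⬝ᵥ M *ᵥ v).continuousOn
  have hu0 : u ≠ 0 := ne_zero_of_mem_unit_sphere ⟨u, hu⟩
  refine ⟨_, by simpa using hM.dotProduct_mulVec_pos hu0, fun v => ?_⟩
  rcases eq_or_ne v 0 with rfl | hv
  · simp
  have hv' : 0 < ‖v‖ := norm_pos_iff.2 hv
  have hscale : v ⬝ᵥ M *ᵥ v = ‖v‖ ^ 2 * ((‖v‖⁻¹ • v) ⬝ᵥ M *ᵥ (‖v‖⁻¹ • v)) := by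
    simp only [mulVec_smul, smul_dotProduct, dotProduct_smul, smul_eq_mul]
    field_simp
  rw [hscale, mul_comm]
  gcongr
  exact hmin (by simp [norm_smul, hv'.ne'] : ‖v‖⁻¹ • v ∈ Metric.sphere 0 1)

lemma PosDef.tendsto_dotProduct_mulVec_cocompact_atTop (hM : M.PosDef) :
    Tendsto (fun v : ι → ℝ => v ⬝ᵥ M *ᵥ v) (cocompact _) atTop := by
  obtain ⟨c, hc, hle⟩ := hM.exists_pos_mul_sq_norm_le
  exact tendsto_atTop_mono hle <|
    (tendsto_pow_atTop two_ne_zero).comp tendsto_norm_cocompact_atTop |>.const_mul_atTop hc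

lemma dotProduct_mulVec_eq_toBlocks {ι₁ ι₂ : Type*} [Fintype ι₁] [Fintype ι₂]
    (Z : Matrix (ι₁ ⊕ ι₂) (ι₁ ⊕ ι₂) ℝ) (β : ι₁ ⊕ ι₂ → ℝ) :
    β ⬝ᵥ Z *ᵥ β = β ∘ Sum.inl ⬝ᵥ Z.toBlocks₁₁ *ᵥ (β ∘ Sum.inl) +
      (β ∘ Sum.inl ⬝ᵥ Z.toBlocks₁₂ *ᵥ (β ∘ Sum.inr) + β ∘ Sum.inr ⬝ᵥ Z.toBlocks₂₁ *ᵥ (β ∘ Sum.inl)) +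
      β ∘ Sum.inr ⬝ᵥ Z.toBlocks₂₂ *ᵥ (β ∘ Sum.inr) := by
  conv_lhs => rw [← fromBlocks_toBlocks Z, ← Sum.elim_comp_inl_inr β]
  rw [fromBlocks_mulVec, sumElim_dotProduct_sumElim, Sum.elim_comp_inl, Sum.elim_comp_inr,
    dotProduct_add, dotProduct_add]
  ring

end Matrix

section Voronoi

variable {ι : Type*} [Fintype ι] {M : Matrix ι ι ℝ}

lemma mem_vorMatrix_iff {β : ι → ℝ} :
    β ∈ VorMatrix M ↔ ∀ n, intVec n ⬝ᵥ M *ᵥ β ≤ 1 / 2 * (intVec n ⬝ᵥ M *ᵥ intVec n) :=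
  Iff.rfl

lemma mem_vorMatrix_iff_forall_le (hM : M.IsHermitian) {β : ι → ℝ} :
    β ∈ VorMatrix M ↔ ∀ n, β ⬝ᵥ M *ᵥ β ≤ (β - intVec n) ⬝ᵥ M *ᵥ (β - intVec n) := by
  refine mem_vorMatrix_iff.trans <| forall_congr' fun n => ?_
  rw [hM.dotProduct_mulVec_sub]
  constructor <;> intro h <;> linarith

lemma isClosed_vorMatrix (M : Matrix ι ι ℝ) : IsClosed (VorMatrix M) := by
  simp only [VorMatrix, Set.ofPred_forall]
  exact isClosed_iInter fun n => isClosed_le (by fun_prop) continuous_const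

lemma convex_vorMatrix (M : Matrix ι ι ℝ) : Convex ℝ (VorMatrix M) := by
  simp only [VorMatrix, Set.ofPred_forall]
  exact convex_iInter fun n => convex_halfSpace_le
    ⟨fun x y => by rw [mulVec_add, dotProduct_add], fun t x => by
      rw [mulVec_smul, dotProduct_smul, smul_eq_mul]⟩ _

lemma neg_mem_vorMatrix {β : ι → ℝ} (hβ : β ∈ VorMatrix M) : -β ∈ VorMatrix M := by
  refine mem_vorMatrix_iff.2 fun n => ?_
  have := mem_vorMatrix_iff.1 hβ (-n)
  simp only [map_neg, mulVec_neg, neg_dotProduct, dotProduct_neg, neg_neg] at this ⊢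
  linarith

lemma exists_sub_intVec_mem_vorMatrix (hM : M.PosDef) (x : ι → ℝ) :
    ∃ n, x - intVec n ∈ VorMatrix M := by
  have htend : Tendsto (fun n => (x - intVec n) ⬝ᵥ M *ᵥ (x - intVec n)) cofinite atTop :=
    hM.tendsto_dotProduct_mulVec_cocompact_atTop.comp <|
      (Homeomorph.subLeft x).isClosedEmbedding.tendsto_cocompact.comp
        tendsto_intVec_cofinite_cocompact
  -- a lattice point closest to `x` for the quadratic form of `M`
  obtain ⟨n, hn⟩ := htend.exists_forall_le
  refine ⟨n, (mem_vorMatrix_iff_forall_le hM.isHermitian).2 fun m => ?_⟩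
  simpa [sub_sub] using hn (n + m)

lemma isCompact_vorMatrix (hM : M.PosDef) : IsCompact (VorMatrix M) := by
  set q := fun v : ι → ℝ => v ⬝ᵥ M *ᵥ v
  obtain ⟨C, hC⟩ := (isCompact_closedBall (0 : ι → ℝ) (1 / 2)).bddAbove_image
    (f := q) (by fun_prop : Continuous q).continuousOn
  obtain ⟨K, hK, hKC⟩ := mem_cocompact.1 <|
    hM.tendsto_dotProduct_mulVec_cocompact_atTop.eventually (eventually_gt_atTop C)
  refine hK.of_isClosed_subset (isClosed_vorMatrix M) fun β hβ => ?_
  by_contra hβK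
  -- `β` is at least as close to `0` as to its coordinatewise rounding, which is within `1 / 2`
  have hround : β - intVec (round ∘ β) ∈ Metric.closedBall 0 (1 / 2) := by
    rw [mem_closedBall_zero_iff, pi_norm_le_iff_of_nonneg (by norm_num)]
    exact fun i => by simpa using abs_sub_round (β i)
  have hle := (mem_vorMatrix_iff_forall_le hM.isHermitian).1 hβ (round ∘ β)
  have hround_le : q (β - intVec (round ∘ β)) ≤ C := hC ⟨_, hround, rfl⟩
  have hlt : C < q β := hKC hβK
  linarith

lemma eq_zero_of_mem_interior_vorMatrix_of_sub_mem (hM : M.PosDef) {u : ι → ℝ} {m : ι → ℤ}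
    (hu : u ∈ interior (VorMatrix M)) (hum : u - intVec m ∈ VorMatrix M) : m = 0 := by
  set v := intVec m
  -- `u` lies on the hyperplane bisecting `0` and `v`, yet `u + t • v` stays in `Vor(M)`
  have hge : 1 / 2 * (v ⬝ᵥ M *ᵥ v) ≤ v ⬝ᵥ M *ᵥ u := by
    have := mem_vorMatrix_iff.1 hum (-m)
    simp only [v, map_neg, mulVec_neg, mulVec_sub, neg_dotProduct, dotProduct_neg,
      dotProduct_sub, neg_neg] at this ⊢
    linarith
  have hpath : ∀ᶠ t in 𝓝[>] (0 : ℝ), u + t • v ∈ VorMatrix M :=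
    nhdsWithin_le_nhds <| (Continuous.tendsto' (by fun_prop) 0 u (by simp)).eventually
      (mem_interior_iff_mem_nhds.1 hu)
  obtain ⟨t, ht, ht0⟩ := (hpath.and self_mem_nhdsWithin).exists
  have hle := mem_vorMatrix_iff.1 ht m
  simp only [mulVec_add, mulVec_smul, dotProduct_add, dotProduct_smul, smul_eq_mul] at hle
  by_contra hm
  have hpos : 0 < v ⬝ᵥ M *ᵥ v := by
    simpa using hM.dotProduct_mulVec_pos (intVec_injective.ne hm |>.trans_eq (map_zero _))
  nlinarith [show (0 : ℝ) < t from ht0]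

open scoped Pointwise in
lemma isAddFundamentalDomain_vorMatrix [DecidableEq ι] (hM : M.PosDef) :
    IsAddFundamentalDomain (Submodule.span ℤ (Set.range (Pi.basisFun ℝ ι))).toAddSubgroup
      (VorMatrix M) where
  nullMeasurableSet := (isClosed_vorMatrix M).measurableSet.nullMeasurableSet
  ae_covers := .of_forall fun x => by
    obtain ⟨n, hn⟩ := exists_sub_intVec_mem_vorMatrix hM x
    refine ⟨⟨-intVec n, mem_span_basisFun_iff.2 ⟨-n, map_neg _ _⟩⟩, ?_⟩
    rwa [AddSubgroup.vadd_def, vadd_eq_add, neg_add_eq_sub]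
  aedisjoint g g' hgg' := by
    -- a common point of two distinct translates lies on the frontier of one of them
    refine measure_mono_null (t := g +ᵥ frontier (VorMatrix M)) (fun x ⟨hx, hx'⟩ => ?_) ?_
    · simp only [Set.mem_vadd_set_iff_neg_vadd_mem, AddSubgroup.vadd_def, vadd_eq_add]
        at hx hx' ⊢
      rw [(isClosed_vorMatrix M).frontier_eq]
      refine ⟨hx, fun hint => hgg' ?_⟩
      obtain ⟨m, hm⟩ := mem_span_basisFun_iff.1 (sub_mem g'.2 g.2)
      have hm0 := eq_zero_of_mem_interior_vorMatrix_of_sub_mem hM hint (m := m)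
        (by convert hx' using 1; rw [hm]; abel)
      rw [hm0, map_zero, eq_comm, sub_eq_zero] at hm
      exact Subtype.ext hm.symm
    · rw [measure_vadd]
      exact (convex_vorMatrix M).addHaar_frontier volume

lemma volume_vorMatrix (hM : M.PosDef) : volume (VorMatrix M) = 1 := by
  classical
  have : Countable (Submodule.span ℤ (Set.range (Pi.basisFun ℝ ι))).toAddSubgroup :=
    inferInstanceAs (Countable (Submodule.span ℤ (Set.range (Pi.basisFun ℝ ι))))
  rw [(isAddFundamentalDomain_vorMatrix hM).measure_eq
    (ZSpan.isAddFundamentalDomain' (Pi.basisFun ℝ ι) volume), ZSpan.fundamentalDomain_pi_basisFun]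
  simp [volume_pi_pi]

lemma measureReal_vorMatrix (hM : M.PosDef) : volume.real (VorMatrix M) = 1 := by
  simp [measureReal_def, volume_vorMatrix hM]

end Voronoi

lemma setIntegral_prod_eq_zero_of_odd_right {α β E : Type*} [MeasurableSpace α]
    [MeasurableSpace β] [InvolutiveNeg β] [MeasurableNeg β] [NormedAddCommGroup E] [NormedSpace ℝ E]
    {μ : Measure α} {ν : Measure β} [SFinite μ] [SFinite ν] [ν.IsNegInvariant]
    {s : Set α} {t : Set β} (ht : ∀ y ∈ t, -y ∈ t) {f : α × β → E}
    (hf : ∀ x y, f (x, -y) = -f (x, y)) :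
    ∫ p in s ×ˢ t, f p ∂μ.prod ν = 0 := by
  set φ := (MeasurableEquiv.refl α).prodCongr (MeasurableEquiv.neg β)
  have hφ : MeasurePreserving φ (μ.prod ν) (μ.prod ν) :=
    (MeasurePreserving.id μ).prod (Measure.measurePreserving_neg ν)
  have hst : φ ⁻¹' s ×ˢ t = s ×ˢ t := by
    ext ⟨x, y⟩
    change x ∈ s ∧ -y ∈ t ↔ x ∈ s ∧ y ∈ t
    exact and_congr_right' ⟨fun h => by simpa using ht _ h, ht y⟩
  have hodd : ∀ p, f (φ p) = -f p := fun p => hf p.1 p.2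
  have := hφ.setIntegral_preimage_emb φ.measurableEmbedding f (s ×ˢ t)
  rw [hst, funext hodd, integral_neg, neg_eq_iff_add_eq_zero, ← two_smul ℝ, smul_eq_zero] at this
  exact this.resolve_left two_ne_zero

section BlockProd

variable {ι₁ ι₂ : Type*}

def blockProd (V₁ : Set (ι₁ → ℝ)) (V₂ : Set (ι₂ → ℝ)) : Set (ι₁ ⊕ ι₂ → ℝ) :=
  {β | β ∘ Sum.inl ∈ V₁ ∧ β ∘ Sum.inr ∈ V₂}

lemma blockProd_eq_preimage (V₁ : Set (ι₁ → ℝ)) (V₂ : Set (ι₂ → ℝ)) :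
    blockProd V₁ V₂ = Equiv.sumPiEquivProdPi (fun _ => ℝ) ⁻¹' V₁ ×ˢ V₂ :=
  rfl

lemma interior_blockProd (V₁ : Set (ι₁ → ℝ)) (V₂ : Set (ι₂ → ℝ)) :
    interior (blockProd V₁ V₂) = blockProd (interior V₁) (interior V₂) := by
  rw [blockProd_eq_preimage, blockProd_eq_preimage, ← interior_prod_eq]
  exact ((Homeomorph.sumPiEquivProdPi ι₁ ι₂ fun _ => ℝ).preimage_interior _).symm

lemma momentOn_blockProd [Fintype ι₁] [Fintype ι₂] {V₁ : Set (ι₁ → ℝ)} {V₂ : Set (ι₂ → ℝ)}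
    (hV₁ : IsCompact V₁) (hV₂ : IsCompact V₂) (hV₂neg : ∀ y ∈ V₂, -y ∈ V₂)
    (Z : Matrix (ι₁ ⊕ ι₂) (ι₁ ⊕ ι₂) ℝ) :
    momentOn (blockProd V₁ V₂) Z =
      momentOn V₁ Z.toBlocks₁₁ * volume.real V₂ + volume.real V₁ * momentOn V₂ Z.toBlocks₂₂ := by
  have he := volume_measurePreserving_sumPiEquivProdPi (fun _ : ι₁ ⊕ ι₂ => ℝ)
  set q₁ := fun x : ι₁ → ℝ => x ⬝ᵥ Z.toBlocks₁₁ *ᵥ x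
  set q₂ := fun y : ι₂ → ℝ => y ⬝ᵥ Z.toBlocks₂₂ *ᵥ y
  set cross := fun p : (ι₁ → ℝ) × (ι₂ → ℝ) =>
    p.1 ⬝ᵥ Z.toBlocks₁₂ *ᵥ p.2 + p.2 ⬝ᵥ Z.toBlocks₂₁ *ᵥ p.1
  have hint {f : (ι₁ → ℝ) × (ι₂ → ℝ) → ℝ} (hf : Continuous f) : IntegrableOn f (V₁ ×ˢ V₂) :=
    hf.continuousOn.integrableOn_compact (hV₁.prod hV₂)
  have h₁ : ∫ p in V₁ ×ˢ V₂, q₁ p.1 = momentOn V₁ Z.toBlocks₁₁ * volume.real V₂ := by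
    simpa [Measure.volume_eq_prod, momentOn] using
      setIntegral_prod_mul (μ := volume) (ν := volume) q₁ (fun _ => (1 : ℝ)) V₁ V₂
  have h₂ : ∫ p in V₁ ×ˢ V₂, q₂ p.2 = volume.real V₁ * momentOn V₂ Z.toBlocks₂₂ := by
    simpa [Measure.volume_eq_prod, momentOn] using
      setIntegral_prod_mul (μ := volume) (ν := volume) (fun _ => (1 : ℝ)) q₂ V₁ V₂
  -- the cross terms are odd in the second block of coordinates
  have hcross : ∫ p in V₁ ×ˢ V₂, cross p = 0 := by
    rw [Measure.volume_eq_prod]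
    exact setIntegral_prod_eq_zero_of_odd_right hV₂neg fun x y => by
      simp only [cross, mulVec_neg, dotProduct_neg, neg_dotProduct]; ring
  calc momentOn (blockProd V₁ V₂) Z = ∫ p in V₁ ×ˢ V₂, (q₁ p.1 + cross p + q₂ p.2) := by
        rw [← he.setIntegral_preimage_emb (MeasurableEquiv.measurableEmbedding _)]
        simp only [momentOn, Matrix.dotProduct_mulVec_eq_toBlocks]
        rfl
    _ = _ := by
        rw [integral_add, integral_add, h₁, hcross, h₂, add_zero]
        all_goals exact hint (by fun_prop)

end BlockProd

/-- With `g = r + s` (so `0 ≤ r ≤ g`, `s = g - r`), `A = [[A₀,0],[0,0]]` with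
`A₀` positive definite `r×r`, and `Z` a real `g×g` matrix whose lower-right `s×s` block is
positive definite, the set `V = Vor(A₀) × Vor(Z₂₂) ⊆ ℝ^r × ℝ^s = ℝ^g` is a fundamental
domain for `ℤ^g` in `ℝ^g`, and `I_V(A) = I(A₀)`, `I_V(Z) = I_{Vor(A₀)}(Z₁₁) + I(Z₂₂)`. -/
theorem momentOn_block_fundamental_domain (r s : ℕ)
    (A₀ : Matrix (Fin r) (Fin r) ℝ) (hA₀ : A₀.PosDef)
    (Z : Matrix (Fin r ⊕ Fin s) (Fin r ⊕ Fin s) ℝ) (hZ : Z.toBlocks₂₂.PosDef) :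
    (∀ x : Fin r ⊕ Fin s → ℝ,
      ∃ w ∈ {β : Fin r ⊕ Fin s → ℝ | (β ∘ Sum.inl) ∈ VorMatrix A₀ ∧
              (β ∘ Sum.inr) ∈ VorMatrix Z.toBlocks₂₂},
        ∃ n : Fin r ⊕ Fin s → ℤ, x = w + fun i => (n i : ℝ)) ∧
    (∀ w ∈ interior {β : Fin r ⊕ Fin s → ℝ | (β ∘ Sum.inl) ∈ VorMatrix A₀ ∧
              (β ∘ Sum.inr) ∈ VorMatrix Z.toBlocks₂₂},
      ∀ w' ∈ interior {β : Fin r ⊕ Fin s → ℝ | (β ∘ Sum.inl) ∈ VorMatrix A₀ ∧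
              (β ∘ Sum.inr) ∈ VorMatrix Z.toBlocks₂₂},
        (∃ n : Fin r ⊕ Fin s → ℤ, w - w' = fun i => (n i : ℝ)) → w = w') ∧
    momentOn {β : Fin r ⊕ Fin s → ℝ | (β ∘ Sum.inl) ∈ VorMatrix A₀ ∧
        (β ∘ Sum.inr) ∈ VorMatrix Z.toBlocks₂₂} (Matrix.fromBlocks A₀ 0 0 0) =
      momentOn (VorMatrix A₀) A₀ ∧
    momentOn {β : Fin r ⊕ Fin s → ℝ | (β ∘ Sum.inl) ∈ VorMatrix A₀ ∧
        (β ∘ Sum.inr) ∈ VorMatrix Z.toBlocks₂₂} Z =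
      momentOn (VorMatrix A₀) Z.toBlocks₁₁ + momentOn (VorMatrix Z.toBlocks₂₂) Z.toBlocks₂₂ := by
  have hV₁ := isCompact_vorMatrix hA₀
  have hV₂ := isCompact_vorMatrix hZ
  have hV₂neg : ∀ y ∈ VorMatrix Z.toBlocks₂₂, -y ∈ VorMatrix Z.toBlocks₂₂ :=
    fun _ => neg_mem_vorMatrix
  refine ⟨fun x => ?_, fun w hw w' hw' ⟨n, hn⟩ => ?_, ?_, ?_⟩
  · obtain ⟨n₁, hn₁⟩ := exists_sub_intVec_mem_vorMatrix hA₀ (x ∘ Sum.inl)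
    obtain ⟨n₂, hn₂⟩ := exists_sub_intVec_mem_vorMatrix hZ (x ∘ Sum.inr)
    exact ⟨x - intVec (Sum.elim n₁ n₂), ⟨hn₁, hn₂⟩, Sum.elim n₁ n₂, (sub_add_cancel _ _).symm⟩
  · rw [← blockProd, interior_blockProd] at hw
    have hw'V : w - (w - w') ∈ blockProd (VorMatrix A₀) (VorMatrix Z.toBlocks₂₂) := by
      rw [sub_sub_cancel]; exact interior_subset hw'
    rw [hn] at hw'V
    have h₁ := eq_zero_of_mem_interior_vorMatrix_of_sub_mem hA₀ hw.1 (m := n ∘ Sum.inl) hw'V.1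
    have h₂ := eq_zero_of_mem_interior_vorMatrix_of_sub_mem hZ hw.2 (m := n ∘ Sum.inr) hw'V.2
    have hn0 : n = 0 := by rw [← Sum.elim_comp_inl_inr n, h₁, h₂, Sum.elim_zero_zero]
    rw [← sub_eq_zero, hn, hn0]
    simp [Pi.zero_def]
  · rw [← blockProd, momentOn_blockProd hV₁ hV₂ hV₂neg]
    simp [measureReal_vorMatrix, hA₀, hZ, momentOn]
  · rw [← blockProd, momentOn_blockProd hV₁ hV₂ hV₂neg, measureReal_vorMatrix hA₀,
      measureReal_vorMatrix hZ, mul_one, one_mul]
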